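/- Let Y be a topological space, n ≥ 1, and let U₁, U₂, U₃ : Y → M_n(ℂ) be continuous mappings such that for every y ∈ Y the matrices U₁(y) and U₃(y) are upper unitriangular and U₂(y) is lower unitriangular. Then there exist continuous mappings A, B : Y → M_n(ℂ) with A(y) and B(y) nilpotent for every y, such that U₁(y)·U₂(y)·U₃(y) = exp(A(y))·exp(B(y)) for all y ∈ Y. -/

import Mathlib

/-!
Let `E_m` and `L_m` be the truncations below degree `m` of the series `exp X` and `log (1 + X)`.
The polynomial `G = E_m ∘ L_m - (1 + X)` vanishes at `0` and satisfies `(1 + X) G' ≡ G` modulo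
`X ^ (m - 1)`, which forces `X ^ m ∣ G`. Hence `exp (L_m(x)) = 1 + x` whenever `x ^ m = 0`, with
`L_m(x)` nilpotent and polynomial, so continuous, in `x`. By Cayley–Hamilton `(U - 1) ^ n = 0`
for every `n × n` unitriangular `U`, and `U₁U₂U₃ = (U₁U₂U₁⁻¹)(U₁U₃)` is a product of two
continuous unipotent families.
-/

def IsLowerUnitriangular {m : ℕ} (M : Matrix (Fin m) (Fin m) ℂ) : Prop :=
  (∀ i, M i i = 1) ∧ ∀ i j : Fin m, i < j → M i j = 0

def IsUpperUnitriangular {m : ℕ} (M : Matrix (Fin m) (Fin m) ℂ) : Prop :=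
  (∀ i, M i i = 1) ∧ ∀ i j : Fin m, j < i → M i j = 0

open Polynomial
open PowerSeries (trunc log)

theorem Polynomial.X_pow_succ_dvd_of_X_pow_dvd_one_add_X_mul_derivative_sub
    {K : Type*} [Field K] [CharZero K] {G : K[X]} {m : ℕ} (h₀ : G.coeff 0 = 0)
    (h : X ^ m ∣ (1 + X) * derivative G - G) : X ^ (m + 1) ∣ G := by
  have hcoeff : ∀ i, ((1 + X) * derivative G - G).coeff i
      = (i + 1) * G.coeff (i + 1) + (i - 1) * G.coeff i := by
    rintro (_ | i)
    · simp [coeff_derivative, sub_eq_add_neg]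
    · simp only [add_mul, one_mul, coeff_sub, coeff_add, coeff_X_mul, coeff_derivative]
      push_cast
      ring
  rw [X_pow_dvd_iff] at h ⊢
  intro d hd
  induction d with
  | zero => exact h₀
  | succ d ih =>
    have h' := h d (by omega)
    rw [hcoeff, ih (by omega), mul_zero, add_zero] at h'
    exact (mul_eq_zero.mp h').resolve_left (Nat.cast_add_one_ne_zero d)

theorem Polynomial.pow_aeval_eq_zero_of_X_dvd {R A : Type*} [CommSemiring R] [Semiring A]
    [Algebra R A] {p : R[X]} (hp : X ∣ p) {x : A} {m : ℕ} (hx : x ^ m = 0) :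
    aeval x p ^ m = 0 := by
  obtain ⟨r, hr⟩ := pow_dvd_pow_of_dvd hp m
  rw [← map_pow, hr, map_mul, map_pow, aeval_X, hx, zero_mul]

theorem derivative_trunc_exp (m : ℕ) :
    derivative (trunc (m + 1) (PowerSeries.exp ℚ)) = trunc m (PowerSeries.exp ℚ) := by
  rw [← PowerSeries.trunc_derivative, PowerSeries.derivative_exp]

theorem one_add_X_mul_derivative_trunc_log (m : ℕ) :
    (1 + X) * derivative (trunc (m + 1) (log ℚ)) = 1 - (-X) ^ m := by
  rw [← PowerSeries.trunc_derivative, PowerSeries.deriv_log, ← eval₂_C_X (p := trunc m _),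
    PowerSeries.eval₂_trunc_eq_sum_range]
  simp only [PowerSeries.coeff_mk, Algebra.algebraMap_self, map_pow, map_neg, map_one, ← neg_pow]
  rw [← mul_neg_geom_sum, sub_neg_eq_add]

theorem X_dvd_trunc_log (m : ℕ) : X ∣ trunc m (log ℚ) :=
  X_dvd_iff.mpr (by simp [PowerSeries.coeff_trunc])

theorem X_pow_dvd_trunc_exp_comp_trunc_log_sub (m : ℕ) :
    X ^ m ∣ (trunc m (PowerSeries.exp ℚ)).comp (trunc m (log ℚ)) - (1 + X) := by
  rcases m with _ | m
  · simp
  set L := trunc (m + 1) (log ℚ)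
  apply X_pow_succ_dvd_of_X_pow_dvd_one_add_X_mul_derivative_sub
  · rw [coeff_zero_eq_eval_zero, eval_sub, eval_comp, ← coeff_zero_eq_eval_zero L]
    simp [L, ← coeff_zero_eq_eval_zero, PowerSeries.coeff_trunc]
  · have hdefect : (1 + X) * derivative ((trunc (m + 1) (PowerSeries.exp ℚ)).comp L - (1 + X))
          - ((trunc (m + 1) (PowerSeries.exp ℚ)).comp L - (1 + X))
        = -(C (PowerSeries.coeff m (PowerSeries.exp ℚ)) * L ^ m
          + (-1) ^ m * (X ^ m * (trunc m (PowerSeries.exp ℚ)).comp L)) := by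
      rw [derivative_sub, derivative_comp, derivative_trunc_exp, PowerSeries.trunc_succ, add_comp,
        monomial_comp, derivative_add, derivative_one, derivative_X, zero_add, ← mul_assoc,
        ← neg_pow]
      linear_combination
        (trunc m (PowerSeries.exp ℚ)).comp L * one_add_X_mul_derivative_trunc_log m
    rw [hdefect]
    exact dvd_neg.mpr (dvd_add ((pow_dvd_pow_of_dvd (X_dvd_trunc_log _) m).mul_left _)
      ((dvd_mul_right _ _).mul_left _))

section UnipotentLog

variable {𝔸 : Type*} [Ring 𝔸] [Algebra ℚ 𝔸] [TopologicalSpace 𝔸] [IsTopologicalRing 𝔸]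

theorem NormedSpace.exp_eq_aeval_trunc_exp {x : 𝔸} {m : ℕ} (hx : x ^ m = 0) :
    NormedSpace.exp x = aeval x (trunc m (PowerSeries.exp ℚ)) := by
  rw [congrFun NormedSpace.exp_eq_tsum_rat x, tsum_eq_sum (s := Finset.range m), aeval_def,
    PowerSeries.eval₂_trunc_eq_sum_range]
  · simp [PowerSeries.coeff_exp, Algebra.smul_def]
  · intro i hi
    rw [pow_eq_zero_of_le (by simpa using hi) hx, smul_zero]

theorem NormedSpace.exp_aeval_trunc_log {x : 𝔸} {m : ℕ} (hx : x ^ m = 0) :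
    NormedSpace.exp (aeval x (trunc m (log ℚ))) = 1 + x := by
  obtain ⟨q, hq⟩ := X_pow_dvd_trunc_exp_comp_trunc_log_sub m
  rw [exp_eq_aeval_trunc_exp (pow_aeval_eq_zero_of_X_dvd (X_dvd_trunc_log m) hx), ← aeval_comp,
    sub_eq_iff_eq_add.mp hq]
  simp [hx]

theorem exists_continuous_isNilpotent_exp_eq {Y : Type*} [TopologicalSpace Y] {U : Y → 𝔸}
    (hU : Continuous U) {m : ℕ} (hu : ∀ y, (U y - 1) ^ m = 0) :
    ∃ A : Y → 𝔸, Continuous A ∧ (∀ y, IsNilpotent (A y)) ∧ ∀ y, NormedSpace.exp (A y) = U y :=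
  ⟨fun y => aeval (U y - 1) (trunc m (log ℚ)),
    (trunc m (log ℚ)).continuous_aeval.comp (hU.sub continuous_const),
    fun y => ⟨m, pow_aeval_eq_zero_of_X_dvd (X_dvd_trunc_log m) (hu y)⟩,
    fun y => by rw [NormedSpace.exp_aeval_trunc_log (hu y), add_sub_cancel]⟩

end UnipotentLog

theorem conj_sub_one_pow {R : Type*} [Ring R] {a b c : R} (hac : a * c = 1) (hca : c * a = 1)
    (m : ℕ) : (a * b * c - 1) ^ m = a * (b - 1) ^ m * c := by
  have : a * b * c - 1 = a * (b - 1) * c := by rw [mul_sub, sub_mul, mul_one, hac]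
  rw [this]
  exact Units.conj_pow ⟨a, c, hac, hca⟩ _ m

namespace Matrix

variable {ι R : Type*} [Fintype ι] [LinearOrder ι] [CommRing R] {M N : Matrix ι ι R}

theorem IsUpperTriangular.mul_apply_self (hM : M.IsUpperTriangular) (hN : N.IsUpperTriangular)
    (i : ι) : (M * N) i i = M i i * N i i := by
  rw [mul_apply, Finset.sum_eq_single i]
  · intro k _ hki
    rcases hki.lt_or_gt with h | h
    · rw [hM h, zero_mul]
    · rw [hN h, mul_zero]
  · simp

theorem IsUpperTriangular.pow_sub_one_eq_zero [DecidableEq ι] (hM : M.IsUpperTriangular)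
    (hd : ∀ i, M i i = 1) : (M - 1) ^ Fintype.card ι = 0 := by
  simpa [charpoly_of_isUpperTriangular M hM, hd, Finset.prod_const] using aeval_self_charpoly M

theorem IsLowerTriangular.pow_sub_one_eq_zero [DecidableEq ι] (hM : M.IsLowerTriangular)
    (hd : ∀ i, M i i = 1) : (M - 1) ^ Fintype.card ι = 0 := by
  have hMt : Mᵀ.IsUpperTriangular := fun _ _ h => hM h
  rw [← transpose_eq_zero, transpose_pow, transpose_sub, transpose_one]
  exact hMt.pow_sub_one_eq_zero hd

end Matrix

namespace IsUpperUnitriangular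

variable {m : ℕ} {M N : Matrix (Fin m) (Fin m) ℂ}

theorem isUpperTriangular (hM : IsUpperUnitriangular M) : M.IsUpperTriangular :=
  fun i j h => hM.2 i j h

theorem mul (hM : IsUpperUnitriangular M) (hN : IsUpperUnitriangular N) :
    IsUpperUnitriangular (M * N) :=
  ⟨fun i => by rw [hM.isUpperTriangular.mul_apply_self hN.isUpperTriangular, hM.1, hN.1, one_mul],
    fun _ _ h => hM.isUpperTriangular.mul hN.isUpperTriangular h⟩

theorem det_eq_one (hM : IsUpperUnitriangular M) : M.det = 1 := by
  simp [Matrix.det_of_isUpperTriangular hM.isUpperTriangular, hM.1]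

theorem pow_sub_one_eq_zero (hM : IsUpperUnitriangular M) : (M - 1) ^ m = 0 := by
  simpa using hM.isUpperTriangular.pow_sub_one_eq_zero hM.1

end IsUpperUnitriangular

theorem IsLowerUnitriangular.pow_sub_one_eq_zero {m : ℕ} {M : Matrix (Fin m) (Fin m) ℂ}
    (hM : IsLowerUnitriangular M) : (M - 1) ^ m = 0 := by
  simpa using Matrix.IsLowerTriangular.pow_sub_one_eq_zero (fun i j h => hM.2 i j h) hM.1

theorem stmt8_general {Y : Type*} [TopologicalSpace Y] (n : ℕ)
    (U₁ U₂ U₃ : Y → Matrix (Fin n) (Fin n) ℂ)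
    (hc₁ : Continuous U₁) (hc₂ : Continuous U₂) (hc₃ : Continuous U₃)
    (hu₁ : ∀ y, IsUpperUnitriangular (U₁ y))
    (hu₂ : ∀ y, IsLowerUnitriangular (U₂ y))
    (hu₃ : ∀ y, IsUpperUnitriangular (U₃ y)) :
    ∃ A B : Y → Matrix (Fin n) (Fin n) ℂ,
      Continuous A ∧ Continuous B ∧
      (∀ y, IsNilpotent (A y)) ∧ (∀ y, IsNilpotent (B y)) ∧
      (∀ y, U₁ y * U₂ y * U₃ y = NormedSpace.exp (A y) * NormedSpace.exp (B y)) := by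
  have hright : ∀ y, U₁ y * (U₁ y).adjugate = 1 := fun y => by
    rw [Matrix.mul_adjugate, (hu₁ y).det_eq_one, one_smul]
  have hleft : ∀ y, (U₁ y).adjugate * U₁ y = 1 := fun y => by
    rw [Matrix.adjugate_mul, (hu₁ y).det_eq_one, one_smul]
  obtain ⟨A, hAc, hAn, hAe⟩ := exists_continuous_isNilpotent_exp_eq
    ((hc₁.matrix_mul hc₂).matrix_mul hc₁.matrix_adjugate) (m := n) fun y => by
      rw [conj_sub_one_pow (hright y) (hleft y), (hu₂ y).pow_sub_one_eq_zero, mul_zero, zero_mul]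
  obtain ⟨B, hBc, hBn, hBe⟩ := exists_continuous_isNilpotent_exp_eq (hc₁.matrix_mul hc₃)
    fun y => ((hu₁ y).mul (hu₃ y)).pow_sub_one_eq_zero
  refine ⟨A, B, hAc, hBc, hAn, hBn, fun y => ?_⟩
  rw [hAe, hBe, mul_assoc (U₁ y * U₂ y), ← mul_assoc _ (U₁ y), hleft, one_mul]

/-- A continuous product of three alternately upper/lower unitriangular matrix-valued maps
is a product of two exponentials of continuous nilpotent-valued maps. -/
theorem stmt8 {Y : Type*} [TopologicalSpace Y] (n : ℕ) (hn : 1 ≤ n)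
    (U₁ U₂ U₃ : Y → Matrix (Fin n) (Fin n) ℂ)
    (hc₁ : Continuous U₁) (hc₂ : Continuous U₂) (hc₃ : Continuous U₃)
    (hu₁ : ∀ y, IsUpperUnitriangular (U₁ y))
    (hu₂ : ∀ y, IsLowerUnitriangular (U₂ y))
    (hu₃ : ∀ y, IsUpperUnitriangular (U₃ y)) :
    ∃ A B : Y → Matrix (Fin n) (Fin n) ℂ,
      Continuous A ∧ Continuous B ∧
      (∀ y, IsNilpotent (A y)) ∧ (∀ y, IsNilpotent (B y)) ∧
      (∀ y, U₁ y * U₂ y * U₃ y = NormedSpace.exp (A y) * NormedSpace.exp (B y)) :=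
  stmt8_general n U₁ U₂ U₃ hc₁ hc₂ hc₃ hu₁ hu₂ hu₃
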